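/- Let R be a staircase region in ℤ² bounded by two monotone NE lattice paths from (0,0) to (a,b). Let A, B ∈ R lie on the same horizontal line with A to the left of B (a₂ = b₂, a₁ ≤ b₁), and let C, D ∈ R lie on a common vertical line at height ≥ a₂, with C below D. Write K(X,Y) for the number of monotone NE lattice paths from X to Y inside R. If b₁ - a₁ > 0, then K(A + e₁, C) · K(B - e₁, D) ≥ K(A, C) · K(B, D), where e₁ = (1,0). -/

import Mathlib

/-!
A path from `(x, r)` to `E` with `x < E.1` leaves the column `x` by an east step from some
`(x, s)` with `r ≤ s ≤ E.2`. When the columns of the region are intervals, `K((x, r), E)` is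
therefore the sum over `s` of the number of paths from `(x, s)` that start with an east step.

A staircase region is a sublattice of `ℤ × ℤ` whose rows and columns are intervals. In such a
region, if `C` lies below `D` in one column and `(x₁, r₁)` lies weakly northwest of `(x₂, r₂)`, then
`K((x₁, r₁), C) K((x₂, r₂), D) ≤ K((x₁, r₂), C) K((x₂, r₁), D)`. This follows by induction on the
distance from `x₁` to the column of `C`: decomposing all four counts along the columns `x₁` and
`x₂`, the difference of the two sides becomes a sum of terms `a_s b_t - a_t b_s` with `t < s`, each
nonnegative by induction, with the sublattice property controlling which points lie in the region.
The theorem follows by decomposing `K(A, C)` along the column of `A` and `K(B - e₁, D)` along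
the column of `B - e₁`, and comparing the terms at height `s` by this inequality for the starting
points `(A.1 + 1, s)` and `B`.
-/

/-- Number of lattice steps of a monotone NE path from `A` to `B`. -/
def steps (A B : ℤ × ℤ) : ℕ := ((B.1 - A.1) + (B.2 - A.2)).toNat

/-- `p : ℕ → ℤ × ℤ` is a monotone NE lattice path from `A` to `B`. -/
def IsNEPath (A B : ℤ × ℤ) (p : ℕ → ℤ × ℤ) : Prop :=
  p 0 = A ∧
  (∀ t, t < steps A B → p (t + 1) = p t + (1, 0) ∨ p (t + 1) = p t + (0, 1)) ∧
  (∀ t, steps A B ≤ t → p t = B)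

/-- The set of lattice points weakly between the NE lattice paths `lower` and
`upper` (each with `n` steps). -/
def staircaseRegion (n : ℕ) (lower upper : ℕ → ℤ × ℤ) : Set (ℤ × ℤ) :=
  {v | (∃ t ≤ n, (lower t).1 = v.1 ∧ (lower t).2 ≤ v.2) ∧
       (∃ t ≤ n, (upper t).1 = v.1 ∧ v.2 ≤ (upper t).2)}

/-- The number of monotone NE lattice paths from `A` to `B` staying inside `R`. -/
noncomputable def pathCount (R : Set (ℤ × ℤ)) (A B : ℤ × ℤ) : ℕ :=
  Nat.card {p : ℕ → ℤ × ℤ // IsNEPath A B p ∧ ∀ t, p t ∈ R}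

open Finset

lemma Int.exists_eq_of_le_add_one {f : ℕ → ℤ} (hf : ∀ t, f (t + 1) ≤ f t + 1) {m n : ℕ}
    (hmn : m ≤ n) {x : ℤ} (hm : f m ≤ x) (hn : x ≤ f n) : ∃ t ∈ Set.Icc m n, f t = x := by
  induction n, hmn using Nat.le_induction with
  | base => exact ⟨m, ⟨le_rfl, le_rfl⟩, le_antisymm hm hn⟩
  | succ n hmn ih =>
    rcases le_or_gt x (f n) with hx | hx
    · obtain ⟨t, ht, hxt⟩ := ih hx
      exact ⟨t, ⟨ht.1, ht.2.trans n.le_succ⟩, hxt⟩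
    · exact ⟨n + 1, ⟨hmn.trans n.le_succ, le_rfl⟩, le_antisymm (by linarith [hf n]) hn⟩

lemma steps_eq_add_one {v w B : ℤ × ℤ} (hw : w = v + (1, 0) ∨ w = v + (0, 1)) (hwB : w ≤ B) :
    steps v B = steps w B + 1 := by
  obtain ⟨h₁, h₂⟩ := hwB
  rcases hw with rfl | rfl <;> simp only [Prod.fst_add, Prod.snd_add] at h₁ h₂ <;>
    simp only [steps, Prod.fst_add, Prod.snd_add] <;> omega

namespace IsNEPath

variable {A B : ℤ × ℤ} {p : ℕ → ℤ × ℤ}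

lemma le_succ (hp : IsNEPath A B p) (t : ℕ) : p t ≤ p (t + 1) := by
  rcases lt_or_ge t (steps A B) with ht | ht
  · rcases hp.2.1 t ht with h | h <;> simp [h, Prod.le_def]
  · rw [hp.2.2 t ht, hp.2.2 (t + 1) (by omega)]

lemma fst_succ_le (hp : IsNEPath A B p) (t : ℕ) : (p (t + 1)).1 ≤ (p t).1 + 1 := by
  rcases lt_or_ge t (steps A B) with ht | ht
  · rcases hp.2.1 t ht with h | h <;> simp [h]
  · simp [hp.2.2 t ht, hp.2.2 (t + 1) (by omega)]

protected lemma monotone (hp : IsNEPath A B p) : Monotone p :=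
  monotone_nat_of_le_succ hp.le_succ

lemma start_le (hp : IsNEPath A B p) (t : ℕ) : A ≤ p t :=
  hp.1 ▸ hp.monotone (Nat.zero_le t)

lemma le_end (hp : IsNEPath A B p) (t : ℕ) : p t ≤ B :=
  hp.2.2 (t + steps A B) (by omega) ▸ hp.monotone (by omega)

lemma le (hp : IsNEPath A B p) : A ≤ B :=
  (hp.start_le 0).trans (hp.le_end 0)

lemma exists_fst_eq (hp : IsNEPath A B p) {t₁ t₂ : ℕ} {x : ℤ} (h₁ : (p t₁).1 ≤ x)
    (h₂ : x ≤ (p t₂).1) : ∃ t ∈ Set.Icc (t₁ ⊓ t₂) (t₁ ⊔ t₂), (p t).1 = x := by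
  have hfst : Monotone fun t => (p t).1 := fun _ _ h => (hp.monotone h).1
  refine Int.exists_eq_of_le_add_one hp.fst_succ_le inf_le_sup ?_ ?_
  · rw [hfst.map_inf]; exact inf_le_of_left_le h₁
  · rw [hfst.map_sup]; exact le_sup_of_le_right h₂

lemma steps_pos (hp : IsNEPath A B p) (hAB : A ≠ B) : 0 < steps A B := by
  by_contra! h
  exact hAB (hp.1 ▸ hp.2.2 0 (by omega))

lemma apply_one (hp : IsNEPath A B p) (hAB : A ≠ B) : p 1 = A + (1, 0) ∨ p 1 = A + (0, 1) :=
  hp.1 ▸ hp.2.1 0 (hp.steps_pos hAB)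

lemma tail (hp : IsNEPath A B p) (hAB : A ≠ B) : IsNEPath (p 1) B (fun t => p (t + 1)) := by
  have hs := steps_eq_add_one (hp.apply_one hAB) (hp.le_end 1)
  exact ⟨rfl, fun t ht => hp.2.1 (t + 1) (by omega), fun t ht => hp.2.2 (t + 1) (by omega)⟩

end IsNEPath

def consPath (v : ℤ × ℤ) (q : ℕ → ℤ × ℤ) : ℕ → ℤ × ℤ
  | 0 => v
  | t + 1 => q t

lemma consPath_injective (v : ℤ × ℤ) : Function.Injective (consPath v) :=
  fun _ _ h => funext fun t => congrFun h (t + 1)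

lemma IsNEPath.consPath {v w B : ℤ × ℤ} {q : ℕ → ℤ × ℤ} (hq : IsNEPath w B q)
    (hw : w = v + (1, 0) ∨ w = v + (0, 1)) : IsNEPath v B (consPath v q) := by
  have hs := steps_eq_add_one hw hq.le
  refine ⟨rfl, fun t ht => ?_, fun t ht => ?_⟩
  · cases t with
    | zero => simpa [_root_.consPath, hq.1] using hw
    | succ t => exact hq.2.1 t (by omega)
  · cases t with
    | zero => omega
    | succ t => exact hq.2.2 t (by omega)

section Counting

variable {R : Set (ℤ × ℤ)} {A B : ℤ × ℤ}

def pathsIn (R : Set (ℤ × ℤ)) (A B : ℤ × ℤ) : Set (ℕ → ℤ × ℤ) :=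
  {p | IsNEPath A B p ∧ ∀ t, p t ∈ R}

lemma pathCount_eq_ncard : pathCount R A B = (pathsIn R A B).ncard := rfl

lemma finite_pathsIn : (pathsIn R A B).Finite := by
  refine Set.Finite.of_injOn (f := fun p (i : Fin (steps A B)) => p i)
    (t := Set.univ.pi fun _ => Set.Icc A B) ?_ ?_ (Set.Finite.pi fun _ => Set.finite_Icc A B)
  · intro p hp i _
    exact ⟨hp.1.start_le _, hp.1.le_end _⟩
  · intro p hp q hq hpq
    funext t
    rcases lt_or_ge t (steps A B) with ht | ht
    · exact congrFun hpq ⟨t, ht⟩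
    · rw [hp.1.2.2 t ht, hq.1.2.2 t ht]

lemma mem_and_le_of_pathCount_ne_zero (h : pathCount R A B ≠ 0) : A ∈ R ∧ B ∈ R ∧ A ≤ B := by
  obtain ⟨p, hp, hpR⟩ := Set.nonempty_of_ncard_ne_zero h
  exact ⟨hp.1 ▸ hpR 0, hp.2.2 _ le_rfl ▸ hpR _, hp.le⟩

lemma pathCount_eq_zero_of_notMem (h : A ∉ R) : pathCount R A B = 0 := by
  contrapose! h
  exact (mem_and_le_of_pathCount_ne_zero h).1

lemma pathCount_eq_zero_of_not_le (h : ¬ A ≤ B) : pathCount R A B = 0 := by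
  contrapose! h
  exact (mem_and_le_of_pathCount_ne_zero h).2.2

lemma pathCount_self (hA : A ∈ R) : pathCount R A A = 1 := by
  rw [pathCount_eq_ncard, Set.ncard_eq_one]
  refine ⟨fun _ => A, Set.eq_singleton_iff_unique_mem.2 ⟨⟨⟨rfl, ?_, fun _ _ => rfl⟩, fun _ => hA⟩, ?_⟩⟩
  · simp [steps]
  · exact fun p hp => funext fun t => hp.1.2.2 t (by simp [steps])

lemma pathsIn_eq_union (hA : A ∈ R) (hAB : A ≠ B) :
    pathsIn R A B =
      consPath A '' pathsIn R (A + (1, 0)) B ∪ consPath A '' pathsIn R (A + (0, 1)) B := by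
  ext p
  constructor
  · rintro ⟨hp, hpR⟩
    have hcons : consPath A (fun t => p (t + 1)) = p := by
      funext t
      cases t with
      | zero => exact hp.1.symm
      | succ t => rfl
    have htail : (fun t => p (t + 1)) ∈ pathsIn R (p 1) B := ⟨hp.tail hAB, fun t => hpR _⟩
    rcases hp.apply_one hAB with h | h
    · exact Or.inl ⟨_, h ▸ htail, hcons⟩
    · exact Or.inr ⟨_, h ▸ htail, hcons⟩
  · rintro (⟨q, ⟨hq, hqR⟩, rfl⟩ | ⟨q, ⟨hq, hqR⟩, rfl⟩)
    · exact ⟨hq.consPath (Or.inl rfl), fun t => by cases t <;> simp [consPath, hA, hqR]⟩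
    · exact ⟨hq.consPath (Or.inr rfl), fun t => by cases t <;> simp [consPath, hA, hqR]⟩

lemma pathCount_eq_add (hA : A ∈ R) (hAB : A ≠ B) :
    pathCount R A B = pathCount R (A + (1, 0)) B + pathCount R (A + (0, 1)) B := by
  have hdisj : Disjoint (pathsIn R (A + (1, 0)) B) (pathsIn R (A + (0, 1)) B) :=
    Set.disjoint_left.2 fun p hp hp' => by simpa using hp.1.1.symm.trans hp'.1.1
  rw [pathCount_eq_ncard, pathsIn_eq_union hA hAB,
    Set.ncard_union_eq ((Set.disjoint_image_iff (consPath_injective A)).2 hdisj)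
      (finite_pathsIn.image _) (finite_pathsIn.image _),
    Set.ncard_image_of_injective _ (consPath_injective A),
    Set.ncard_image_of_injective _ (consPath_injective A)]
  rfl

end Counting

section Columns

variable {R : Set (ℤ × ℤ)} {E : ℤ × ℤ} {x r s : ℤ}

lemma pathCount_vertical (hcol : {y | (x, y) ∈ R}.OrdConnected) (hr : (x, r) ∈ R)
    (hs : (x, s) ∈ R) (hrs : r ≤ s) : pathCount R (x, r) (x, s) = 1 := by
  induction r, hrs using Int.leInductionDown with
  | base => exact pathCount_self hs
  | pred n hn ih =>
    rw [pathCount_eq_add hr (by simp; omega), pathCount_eq_zero_of_not_le (by simp),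
      zero_add]
    simp only [Prod.mk_add_mk, add_zero, sub_add_cancel]
    exact ih (hcol.out hr hs ⟨by omega, hn⟩)

open Classical in
/-- The number of paths in `R` from `(x, s)` to `E` whose first step is an east step. -/
noncomputable def eastFirstCount (R : Set (ℤ × ℤ)) (x s : ℤ) (E : ℤ × ℤ) : ℕ :=
  if (x, s) ∈ R then pathCount R (x + 1, s) E else 0

lemma pathCount_eq_zero_of_snd_lt (h : E.2 < r) : pathCount R (x, r) E = 0 :=
  pathCount_eq_zero_of_not_le fun hle => h.not_ge hle.2

lemma pathCount_eq_sum_eastFirstCount (hcol : {y | (x, y) ∈ R}.OrdConnected)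
    (hr : (x, r) ∈ R) (hx : x < E.1) :
    pathCount R (x, r) E = ∑ s ∈ Icc r E.2, eastFirstCount R x s E := by
  rcases lt_or_ge (E.2 + 1) r with hrE | hrE
  · rw [pathCount_eq_zero_of_snd_lt (by omega), Icc_eq_empty_of_lt (by omega), sum_empty]
  induction r, hrE using Int.leInductionDown with
  | base => rw [pathCount_eq_zero_of_snd_lt (by omega), Icc_eq_empty_of_lt (by omega), sum_empty]
  | pred n hn ih =>
    rw [pathCount_eq_add hr (fun h => by simp [← h] at hx),
      ← insert_Icc_add_one_left_eq_Icc (by omega : n - 1 ≤ E.2), sum_insert (by simp),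
      eastFirstCount, if_pos hr]
    simp only [Prod.mk_add_mk, add_zero, sub_add_cancel]
    congr 1
    by_cases hn' : (x, n) ∈ R
    · exact ih hn'
    · rw [pathCount_eq_zero_of_notMem hn', eq_comm]
      refine sum_eq_zero fun s hs => if_neg fun hs' => hn' (hcol.out hr hs' ⟨by omega, ?_⟩)
      rw [mem_Icc] at hs
      omega

end Columns

structure IsStaircase (R : Set (ℤ × ℤ)) : Prop where
  isSublattice : IsSublattice R
  ordConnected_column (x : ℤ) : {y | (x, y) ∈ R}.OrdConnected
  ordConnected_row (y : ℤ) : {x | (x, y) ∈ R}.OrdConnected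

namespace IsStaircase

variable {R : Set (ℤ × ℤ)} {x₁ x₂ r₁ r₂ : ℤ}

lemma southwest_mem (hR : IsStaircase R) (h₁ : (x₁, r₁) ∈ R) (h₂ : (x₂, r₂) ∈ R)
    (hx : x₁ ≤ x₂) (hr : r₂ ≤ r₁) : (x₁, r₂) ∈ R := by
  simpa [hx, hr] using hR.isSublattice.infClosed h₁ h₂

lemma northeast_mem (hR : IsStaircase R) (h₁ : (x₁, r₁) ∈ R) (h₂ : (x₂, r₂) ∈ R)
    (hx : x₁ ≤ x₂) (hr : r₂ ≤ r₁) : (x₂, r₁) ∈ R := by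
  simpa [hx, hr] using hR.isSublattice.supClosed h₁ h₂

end IsStaircase

section Region

variable {n : ℕ} {P Q : ℤ × ℤ} {p : ℕ → ℤ × ℤ}

def weaklyAbove (n : ℕ) (p : ℕ → ℤ × ℤ) : Set (ℤ × ℤ) :=
  {v | ∃ t ≤ n, (p t).1 = v.1 ∧ (p t).2 ≤ v.2}

def weaklyBelow (n : ℕ) (p : ℕ → ℤ × ℤ) : Set (ℤ × ℤ) :=
  {v | ∃ t ≤ n, (p t).1 = v.1 ∧ v.2 ≤ (p t).2}

lemma staircaseRegion_eq_inter (lower upper : ℕ → ℤ × ℤ) :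
    staircaseRegion n lower upper = weaklyAbove n lower ∩ weaklyBelow n upper := rfl

lemma isSublattice_weaklyAbove (hp : Monotone p) : IsSublattice (weaklyAbove n p) where
  supClosed := fun _ ⟨t, ht, h₁, h₂⟩ _ ⟨t', ht', h₁', h₂'⟩ =>
    ⟨t ⊔ t', sup_le ht ht', by simp [hp.map_sup, h₁, h₁'],
      by simpa [hp.map_sup] using sup_le_sup h₂ h₂'⟩
  infClosed := fun _ ⟨t, ht, h₁, h₂⟩ _ ⟨t', ht', h₁', h₂'⟩ =>
    ⟨t ⊓ t', inf_le_of_left_le ht, by simp [hp.map_inf, h₁, h₁'],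
      by simpa [hp.map_inf] using inf_le_inf h₂ h₂'⟩

lemma isSublattice_weaklyBelow (hp : Monotone p) : IsSublattice (weaklyBelow n p) where
  supClosed := fun _ ⟨t, ht, h₁, h₂⟩ _ ⟨t', ht', h₁', h₂'⟩ =>
    ⟨t ⊔ t', sup_le ht ht', by simp [hp.map_sup, h₁, h₁'],
      by simpa [hp.map_sup] using sup_le_sup h₂ h₂'⟩
  infClosed := fun _ ⟨t, ht, h₁, h₂⟩ _ ⟨t', ht', h₁', h₂'⟩ =>
    ⟨t ⊓ t', inf_le_of_left_le ht, by simp [hp.map_inf, h₁, h₁'],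
      by simpa [hp.map_inf] using inf_le_inf h₂ h₂'⟩

lemma ordConnected_column_weaklyAbove (x : ℤ) : {y | (x, y) ∈ weaklyAbove n p}.OrdConnected :=
  IsUpperSet.ordConnected fun _ _ hle ⟨t, ht, h₁, h₂⟩ => ⟨t, ht, h₁, h₂.trans hle⟩

lemma ordConnected_column_weaklyBelow (x : ℤ) : {y | (x, y) ∈ weaklyBelow n p}.OrdConnected :=
  IsLowerSet.ordConnected fun _ _ hle ⟨t, ht, h₁, h₂⟩ => ⟨t, ht, h₁, hle.trans h₂⟩

lemma ordConnected_row_weaklyAbove (hp : IsNEPath P Q p) (y : ℤ) :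
    {x | (x, y) ∈ weaklyAbove n p}.OrdConnected :=
  ⟨fun _ ⟨t₁, ht₁, h₁, h₁'⟩ _ ⟨t₂, ht₂, h₂, h₂'⟩ x hx => by
    obtain ⟨t, ht, hxt⟩ := hp.exists_fst_eq (h₁.trans_le hx.1) (hx.2.trans h₂.ge)
    have hy : (p t).2 ≤ (p (t₁ ⊔ t₂)).2 := (hp.monotone ht.2).2
    rw [hp.monotone.map_sup] at hy
    exact ⟨t, ht.2.trans (sup_le ht₁ ht₂), hxt, hy.trans (sup_le h₁' h₂')⟩⟩

lemma ordConnected_row_weaklyBelow (hp : IsNEPath P Q p) (y : ℤ) :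
    {x | (x, y) ∈ weaklyBelow n p}.OrdConnected :=
  ⟨fun _ ⟨t₁, ht₁, h₁, h₁'⟩ _ ⟨t₂, ht₂, h₂, h₂'⟩ x hx => by
    obtain ⟨t, ht, hxt⟩ := hp.exists_fst_eq (h₁.trans_le hx.1) (hx.2.trans h₂.ge)
    have hy : (p (t₁ ⊓ t₂)).2 ≤ (p t).2 := (hp.monotone ht.1).2
    rw [hp.monotone.map_inf] at hy
    exact ⟨t, ht.2.trans (sup_le ht₁ ht₂), hxt, (le_inf h₁' h₂').trans hy⟩⟩

theorem isStaircase_staircaseRegion {lower upper : ℕ → ℤ × ℤ} {P Q P' Q' : ℤ × ℤ}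
    (hlow : IsNEPath P Q lower) (hup : IsNEPath P' Q' upper) (n : ℕ) :
    IsStaircase (staircaseRegion n lower upper) := by
  rw [staircaseRegion_eq_inter]
  exact ⟨(isSublattice_weaklyAbove hlow.monotone).inter (isSublattice_weaklyBelow hup.monotone),
    fun x => (ordConnected_column_weaklyAbove x).inter (ordConnected_column_weaklyBelow x),
    fun y => (ordConnected_row_weaklyAbove hlow y).inter (ordConnected_row_weaklyBelow hup y)⟩

end Region

lemma sum_Ico_add_sum_Icc {M : Type*} [AddCommMonoid M] (f : ℤ → M) {a b c : ℤ} (hab : a ≤ b)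
    (hbc : b ≤ c + 1) : ∑ s ∈ Ico a b, f s + ∑ s ∈ Icc b c, f s = ∑ s ∈ Icc a c, f s := by
  rw [← sum_union (disjoint_left.2 fun s hs hs' => by simp at hs hs'; omega)]
  congr 1
  ext s
  simp only [mem_union, mem_Ico, mem_Icc]
  omega

lemma sum_mul_sum_le_of_cross {f g : ℤ → ℕ} {r₁ r₂ c d : ℤ} (hr : r₂ ≤ r₁) (hc : r₁ ≤ c)
    (hcd : c ≤ d) (hfg : ∀ s ∈ Icc r₁ c, ∀ t ∈ Ico r₂ r₁, f s * g t ≤ f t * g s) :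
    (∑ s ∈ Icc r₁ c, f s) * ∑ t ∈ Icc r₂ d, g t ≤
      (∑ s ∈ Icc r₂ c, f s) * ∑ t ∈ Icc r₁ d, g t := by
  rw [← sum_Ico_add_sum_Icc g hr (by omega), ← sum_Ico_add_sum_Icc f hr (by omega), mul_add,
    add_mul]
  gcongr ?_ + _
  calc (∑ s ∈ Icc r₁ c, f s) * ∑ t ∈ Ico r₂ r₁, g t
      = ∑ s ∈ Icc r₁ c, ∑ t ∈ Ico r₂ r₁, f s * g t := sum_mul_sum _ _ _ _
    _ ≤ ∑ s ∈ Icc r₁ c, ∑ t ∈ Ico r₂ r₁, f t * g s :=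
      sum_le_sum fun s hs => sum_le_sum fun t ht => hfg s hs t ht
    _ = (∑ t ∈ Ico r₂ r₁, f t) * ∑ s ∈ Icc r₁ c, g s := by rw [sum_mul_sum, sum_comm]
    _ ≤ (∑ t ∈ Ico r₂ r₁, f t) * ∑ s ∈ Icc r₁ d, g s := by
      gcongr

namespace IsStaircase

variable {R : Set (ℤ × ℤ)} {x₁ x₂ r₁ r₂ c y y' : ℤ}

lemma eastFirstCount_mul_le {C D : ℤ × ℤ} {s t : ℤ} (hR : IsStaircase R) (hx : x₁ ≤ x₂)
    (hts : t ≤ s)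
    (h : pathCount R (x₁ + 1, s) C * pathCount R (x₂ + 1, t) D ≤
      pathCount R (x₁ + 1, t) C * pathCount R (x₂ + 1, s) D) :
    eastFirstCount R x₁ s C * eastFirstCount R x₂ t D ≤
      eastFirstCount R x₁ t C * eastFirstCount R x₂ s D := by
  unfold eastFirstCount
  by_cases h₁ : (x₁, s) ∈ R
  · by_cases h₂ : (x₂, t) ∈ R
    · rwa [if_pos h₁, if_pos h₂, if_pos (hR.southwest_mem h₁ h₂ hx hts),
        if_pos (hR.northeast_mem h₁ h₂ hx hts)]
    · simp [h₂]
  · simp [h₁]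

lemma pathCount_mul_le_of_le_fst (hR : IsStaircase R) (hy : y ≤ y') (hx : x₁ ≤ x₂)
    (hr : r₂ ≤ r₁) (hcx : c ≤ x₁) :
    pathCount R (x₁, r₁) (c, y) * pathCount R (x₂, r₂) (c, y') ≤
      pathCount R (x₁, r₂) (c, y) * pathCount R (x₂, r₁) (c, y') := by
  by_cases h : pathCount R (x₁, r₁) (c, y) * pathCount R (x₂, r₂) (c, y') = 0
  · simp [h]
  obtain ⟨h₁, h₂⟩ := mul_ne_zero_iff.1 h
  obtain ⟨hP, hC, hPC⟩ := mem_and_le_of_pathCount_ne_zero h₁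
  obtain ⟨hQ, hD, hQD⟩ := mem_and_le_of_pathCount_ne_zero h₂
  simp only [Prod.mk_le_mk] at hPC hQD
  have hcol := hR.ordConnected_column c
  obtain rfl : x₁ = c := by omega
  obtain rfl : x₂ = x₁ := by omega
  rw [pathCount_vertical hcol hP hC hPC.2, pathCount_vertical hcol hQ hD hQD.2,
    pathCount_vertical hcol hQ hC (hr.trans hPC.2),
    pathCount_vertical hcol hP hD (hPC.2.trans hy)]

lemma pathCount_mul_le_of_succ (hR : IsStaircase R) (hy : y ≤ y') (hx : x₁ ≤ x₂)
    (hr : r₂ ≤ r₁) (hxc : x₁ < c)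
    (ih : ∀ s t, t ≤ s → pathCount R (x₁ + 1, s) (c, y) * pathCount R (x₂ + 1, t) (c, y') ≤
      pathCount R (x₁ + 1, t) (c, y) * pathCount R (x₂ + 1, s) (c, y')) :
    pathCount R (x₁, r₁) (c, y) * pathCount R (x₂, r₂) (c, y') ≤
      pathCount R (x₁, r₂) (c, y) * pathCount R (x₂, r₁) (c, y') := by
  by_cases h : pathCount R (x₁, r₁) (c, y) * pathCount R (x₂, r₂) (c, y') = 0
  · simp [h]
  obtain ⟨h₁, h₂⟩ := mul_ne_zero_iff.1 h
  obtain ⟨hP, -, hPC⟩ := mem_and_le_of_pathCount_ne_zero h₁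
  obtain ⟨hQ, hD, hQD⟩ := mem_and_le_of_pathCount_ne_zero h₂
  simp only [Prod.mk_le_mk] at hPC hQD
  have hSW := hR.southwest_mem hP hQ hx hr
  have hNE := hR.northeast_mem hP hQ hx hr
  rw [pathCount_eq_sum_eastFirstCount (hR.ordConnected_column x₁) hP hxc,
    pathCount_eq_sum_eastFirstCount (hR.ordConnected_column x₁) hSW hxc]
  rcases hQD.1.lt_or_eq with hx₂c | rfl
  · rw [pathCount_eq_sum_eastFirstCount (hR.ordConnected_column x₂) hQ hx₂c,
      pathCount_eq_sum_eastFirstCount (hR.ordConnected_column x₂) hNE hx₂c]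
    refine sum_mul_sum_le_of_cross hr hPC.2 hy fun s hs t ht => ?_
    simp only [mem_Icc, mem_Ico] at hs ht
    exact hR.eastFirstCount_mul_le hx (by omega) (ih s t (by omega))
  · rw [pathCount_vertical (hR.ordConnected_column x₂) hQ hD hQD.2,
      pathCount_vertical (hR.ordConnected_column x₂) hNE hD (hPC.2.trans hy), mul_one, mul_one]
    exact sum_le_sum_of_subset (Icc_subset_Icc_left hr)

theorem pathCount_mul_le_pathCount_mul (hR : IsStaircase R) (hy : y ≤ y') (hx : x₁ ≤ x₂)
    (hr : r₂ ≤ r₁) :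
    pathCount R (x₁, r₁) (c, y) * pathCount R (x₂, r₂) (c, y') ≤
      pathCount R (x₁, r₂) (c, y) * pathCount R (x₂, r₁) (c, y') := by
  obtain ⟨k, hk⟩ : ∃ k : ℕ, c - x₁ ≤ k := ⟨_, Int.self_le_toNat _⟩
  induction k generalizing x₁ x₂ r₁ r₂ with
  | zero => exact hR.pathCount_mul_le_of_le_fst hy hx hr (by omega)
  | succ k ih =>
    rcases le_or_gt c x₁ with hcx | hxc
    · exact hR.pathCount_mul_le_of_le_fst hy hx hr hcx
    · exact hR.pathCount_mul_le_of_succ hy hx hr hxc fun s t hts => ih (by omega) hts (by omega)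

lemma eastFirstCount_mul_pathCount_le (hR : IsStaircase R) {a b h s : ℤ} (hy : y ≤ y')
    (hab : a < b) (hs : h ≤ s) :
    eastFirstCount R a s (c, y) * pathCount R (b, h) (c, y') ≤
      pathCount R (a + 1, h) (c, y) * eastFirstCount R (b - 1) s (c, y') := by
  unfold eastFirstCount
  by_cases has : (a, s) ∈ R
  · have key := hR.pathCount_mul_le_pathCount_mul (c := c) hy (by omega : a + 1 ≤ b) hs
    by_cases hbs : (b - 1, s) ∈ R
    · rwa [if_pos has, if_pos hbs, sub_add_cancel]
    · have hzero : pathCount R (b, s) (c, y') = 0 := by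
        refine pathCount_eq_zero_of_notMem fun hbs' => hbs ?_
        exact (hR.ordConnected_row s).out has hbs' ⟨by omega, by omega⟩
      rw [hzero, mul_zero] at key
      rwa [if_pos has, if_neg hbs, mul_zero]
  · simp [has]

theorem pathCount_mul_le_horizontal (hR : IsStaircase R) {A B C D : ℤ × ℤ} (hAB : A.2 = B.2)
    (hlt : A.1 < B.1) (hCD : C.1 = D.1) (hy : C.2 ≤ D.2) :
    pathCount R A C * pathCount R B D ≤
      pathCount R (A + (1, 0)) C * pathCount R (B - (1, 0)) D := by
  obtain ⟨a, h⟩ := A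
  obtain ⟨b, h'⟩ := B
  obtain ⟨c, y⟩ := C
  obtain ⟨c', y'⟩ := D
  dsimp only at hAB hlt hCD hy
  subst hAB hCD
  simp only [Prod.mk_add_mk, Prod.mk_sub_mk, add_zero, sub_zero]
  by_cases hzero : pathCount R (a, h) (c, y) * pathCount R (b, h) (c, y') = 0
  · simp [hzero]
  obtain ⟨hA, -, hAC⟩ := mem_and_le_of_pathCount_ne_zero (left_ne_zero_of_mul hzero)
  obtain ⟨hB, -, hBD⟩ := mem_and_le_of_pathCount_ne_zero (right_ne_zero_of_mul hzero)
  simp only [Prod.mk_le_mk] at hAC hBD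
  have hB' : (b - 1, h) ∈ R := (hR.ordConnected_row h).out hA hB ⟨by omega, by omega⟩
  rw [pathCount_eq_sum_eastFirstCount (hR.ordConnected_column a) hA (by omega),
    pathCount_eq_sum_eastFirstCount (hR.ordConnected_column _) hB' (by omega), sum_mul, mul_sum]
  calc ∑ s ∈ Icc h y, eastFirstCount R a s (c, y) * pathCount R (b, h) (c, y')
      ≤ ∑ s ∈ Icc h y, pathCount R (a + 1, h) (c, y) * eastFirstCount R (b - 1) s (c, y') :=
        sum_le_sum fun s hs => hR.eastFirstCount_mul_pathCount_le hy hlt (mem_Icc.1 hs).1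
    _ ≤ ∑ s ∈ Icc h y', pathCount R (a + 1, h) (c, y) * eastFirstCount R (b - 1) s (c, y') :=
        sum_le_sum_of_subset (Icc_subset_Icc_right hy)

end IsStaircase

theorem lattice_path_horizontal_general {a b : ℤ} (lower upper : ℕ → ℤ × ℤ)
    (hlow : IsNEPath (0, 0) (a, b) lower) (hup : IsNEPath (0, 0) (a, b) upper)
    (R : Set (ℤ × ℤ)) (hR : R = staircaseRegion (steps (0, 0) (a, b)) lower upper)
    (A B C D : ℤ × ℤ)
    (hABrow : A.2 = B.2)
    (hCDcol : C.1 = D.1) (hCDle : C.2 ≤ D.2)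
    (hgap : A.1 < B.1) :
    pathCount R A C * pathCount R B D ≤
      pathCount R (A + (1, 0)) C * pathCount R (B - (1, 0)) D :=
  hR ▸ (isStaircase_staircaseRegion hlow hup _).pathCount_mul_le_horizontal hABrow hgap hCDcol
    hCDle

/-- Lemma 6.4(a): horizontal variant of the path-switching inequality in a
staircase region. -/
theorem lattice_path_horizontal {a b : ℤ} (lower upper : ℕ → ℤ × ℤ)
    (hlow : IsNEPath (0, 0) (a, b) lower) (hup : IsNEPath (0, 0) (a, b) upper)
    (R : Set (ℤ × ℤ)) (hR : R = staircaseRegion (steps (0, 0) (a, b)) lower upper)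
    (hlR : ∀ t, lower t ∈ R) (huR : ∀ t, upper t ∈ R)
    (A B C D : ℤ × ℤ) (hA : A ∈ R) (hB : B ∈ R) (hC : C ∈ R) (hD : D ∈ R)
    (hABrow : A.2 = B.2) (hABle : A.1 ≤ B.1)
    (hCDcol : C.1 = D.1) (hCup : A.2 ≤ C.2) (hDup : A.2 ≤ D.2) (hCDle : C.2 ≤ D.2)
    (hgap : A.1 < B.1) :
    pathCount R A C * pathCount R B D ≤
      pathCount R (A + (1, 0)) C * pathCount R (B - (1, 0)) D :=
  lattice_path_horizontal_general lower upper hlow hup R hR A B C D hABrow hCDcol hCDle hgap
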